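/- Every real 2n×2n symplectic matrix S can be written as a product S = S₁·S₂ where S₁ and S₂ are symplectic matrices whose upper-right n×n blocks are invertible (i.e., free symplectic matrices) and which in addition satisfy det(S₁ − I) ≠ 0 and det(S₂ − I) ≠ 0. -/

import Mathlib

/-!
The matrices `x • 1 + y • J` (with `J = sympJ n`) form a copy of `ℂ`, and those coming from unit
complex numbers are symplectic. Take `S₂ = ofComplex ζ` and `S₁ = S * ofComplex ζ⁻¹`, where
`ζ = (1 + u i) / (1 - u i)` is the Cayley transform of `u ∈ (0, 1)`. Then `S₂` is free and
`S₂ - 1` is invertible. The upper-right block of `S₁` is a nonzero multiple of `B - t • A` with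
`t = 2u / (1 - u²)`, and `S₁ - 1` is invertible iff `S (1 - u J) - (1 + u J)` is. Each of these two
linear pencils is singular for finitely many parameters only: a null vector at each singular
parameter, suitably transported, gives a family of nonzero vectors which the symplectic relations
make pairwise orthogonal. So some `u ∈ (0, 1)` avoids both.
-/

open Matrix

/-- The standard symplectic matrix `J = [[0, I],[-I, 0]]`. -/
noncomputable def sympJ (n : ℕ) : Matrix (Fin n ⊕ Fin n) (Fin n ⊕ Fin n) ℝ :=
  Matrix.fromBlocks 0 1 (-1) 0

open ComplexConjugate

theorem finite_of_pairwise_dotProduct_eq_zero {ι m : Type*} [Fintype m] {v : ι → m → ℝ}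
    (hv : ∀ i, v i ≠ 0) (horth : Pairwise fun i j => v i ⬝ᵥ v j = 0) : Finite ι := by
  have : LinearIndependent ℝ fun i => WithLp.toLp 2 (v i) :=
    linearIndependent_of_ne_zero_of_inner_eq_zero (fun i => by simpa using hv i)
      fun i j hij => by simpa [EuclideanSpace.inner_toLp_toLp] using horth hij.symm
  exact this.finite

/-- The hypotheses say that the rows of `[A B]` span a Lagrangian subspace of `ℝᵐ × ℝᵐ`. -/
theorem finite_setOf_det_sub_smul_eq_zero {m : Type*} [Fintype m] [DecidableEq m]
    {A B : Matrix m m ℝ} (hAB : A * Bᵀ = B * Aᵀ)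
    (hrank : ∀ x, x ᵥ* A = 0 → x ᵥ* B = 0 → x = 0) :
    {t : ℝ | (B - t • A).det = 0}.Finite := by
  have hker (t : {t : ℝ | (B - t • A).det = 0}) : ∃ x ≠ 0, x ᵥ* B = (t : ℝ) • (x ᵥ* A) := by
    obtain ⟨x, hx, hxt⟩ := exists_vecMul_eq_zero_iff.mpr t.2
    exact ⟨x, hx, by rwa [vecMul_sub, vecMul_smul, sub_eq_zero] at hxt⟩
  choose x hx0 hx using hker
  have hsymm (y z : m → ℝ) : (y ᵥ* A) ⬝ᵥ (z ᵥ* B) = (y ᵥ* B) ⬝ᵥ (z ᵥ* A) := by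
    rw [← dotProduct_mulVec, ← dotProduct_mulVec, ← mulVec_transpose B, ← mulVec_transpose A,
      mulVec_mulVec, mulVec_mulVec, hAB]
  refine Set.finite_coe_iff.mp (finite_of_pairwise_dotProduct_eq_zero (v := fun t => x t ᵥ* A)
    (fun t hA => hx0 t (hrank _ hA (by rw [hx, hA, smul_zero]))) fun t t' htt' => ?_)
  have h := hsymm (x t) (x t')
  rw [hx, hx, dotProduct_smul, smul_dotProduct, smul_eq_mul, smul_eq_mul, ← sub_eq_zero,
    ← sub_mul] at h
  exact (mul_eq_zero.mp h).resolve_left (sub_ne_zero.mpr fun h => htt' (Subtype.ext h.symm))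

theorem Matrix.eq_zero_of_vecMul_toBlocks₁₁_of_vecMul_toBlocks₁₂ {l R : Type*} [Fintype l]
    [DecidableEq l] [CommRing R] {S : Matrix (l ⊕ l) (l ⊕ l) R} (hS : IsUnit S.det) {x : l → R}
    (h₁ : x ᵥ* S.toBlocks₁₁ = 0) (h₂ : x ᵥ* S.toBlocks₁₂ = 0) : x = 0 := by
  have h : Sum.elim x 0 ᵥ* S = 0 ᵥ* S := by
    rw [← fromBlocks_toBlocks S, vecMul_fromBlocks]
    ext (i | i) <;> simp [h₁, h₂]
  funext i
  simpa using congrFun (vecMul_injective_of_isUnit ((isUnit_iff_isUnit_det S).mpr hS) h) (.inl i)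

namespace SymplecticGroup

variable {l : Type*} [Fintype l] [DecidableEq l]

theorem toBlocks₁₁_mul_transpose_toBlocks₁₂ {R : Type*} [CommRing R]
    {S : Matrix (l ⊕ l) (l ⊕ l) R} (hS : S ∈ symplecticGroup l R) :
    S.toBlocks₁₁ * S.toBlocks₁₂ᵀ = S.toBlocks₁₂ * S.toBlocks₁₁ᵀ := by
  have h := transpose_mem hS
  rw [← fromBlocks_toBlocks S, fromBlocks_transpose, fromBlocks_mem_iff] at h
  simpa using h.1

theorem finite_setOf_det_toBlocks₁₂_sub_smul_toBlocks₁₁_eq_zero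
    {S : Matrix (l ⊕ l) (l ⊕ l) ℝ} (hS : S ∈ symplecticGroup l ℝ) :
    {t : ℝ | (S.toBlocks₁₂ - t • S.toBlocks₁₁).det = 0}.Finite :=
  finite_setOf_det_sub_smul_eq_zero (toBlocks₁₁_mul_transpose_toBlocks₁₂ hS)
    fun _ => eq_zero_of_vecMul_toBlocks₁₁_of_vecMul_toBlocks₁₂ (symplectic_det hS)

end SymplecticGroup

theorem sympJ_eq_neg_J (n : ℕ) : sympJ n = -J (Fin n) ℝ := by
  simp [sympJ, J, fromBlocks_neg]

theorem sympJ_mul_self (n : ℕ) : sympJ n * sympJ n = -1 := by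
  rw [sympJ_eq_neg_J, neg_mul_neg, J_squared]

theorem sympJ_transpose (n : ℕ) : (sympJ n)ᵀ = -sympJ n := by
  rw [sympJ_eq_neg_J, transpose_neg, J_transpose]

theorem mulVec_dotProduct_mulVec_mulVec {m : Type*} [Fintype m] (M N M' : Matrix m m ℝ)
    (v w : m → ℝ) : (M *ᵥ v) ⬝ᵥ (N *ᵥ (M' *ᵥ w)) = v ⬝ᵥ ((Mᵀ * N * M') *ᵥ w) := by
  rw [← mulVec_mulVec, ← mulVec_mulVec, dotProduct_mulVec v, vecMul_transpose]

section SympJ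

variable {n : ℕ}

theorem mem_symplecticGroup_iff_sympJ {S : Matrix (Fin n ⊕ Fin n) (Fin n ⊕ Fin n) ℝ} :
    S ∈ symplecticGroup (Fin n) ℝ ↔ Sᵀ * sympJ n * S = sympJ n := by
  rw [SymplecticGroup.mem_iff', sympJ_eq_neg_J, mul_neg, neg_mul, neg_inj]

theorem transpose_one_add_smul_sympJ (u : ℝ) : (1 + u • sympJ n)ᵀ = 1 - u • sympJ n := by
  rw [transpose_add, transpose_one, transpose_smul, sympJ_transpose, smul_neg, sub_eq_add_neg]

theorem transpose_one_add_smul_sympJ_mul_sympJ_mul_sub (u u' : ℝ) :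
    (1 + u • sympJ n)ᵀ * sympJ n * (1 + u' • sympJ n)
      - (1 - u • sympJ n)ᵀ * sympJ n * (1 - u' • sympJ n) = (2 * (u - u')) • 1 := by
  rw [sub_eq_add_neg (1 : Matrix _ _ ℝ), ← neg_smul, transpose_one_add_smul_sympJ,
    transpose_one_add_smul_sympJ]
  simp only [sub_eq_add_neg, add_mul, mul_add, one_mul, mul_one, smul_mul_assoc, mul_smul_comm,
    neg_smul, neg_mul, mul_neg, neg_neg, sympJ_mul_self, smul_neg]
  module

theorem finite_setOf_det_mul_one_sub_smul_sympJ_sub_eq_zero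
    {S : Matrix (Fin n ⊕ Fin n) (Fin n ⊕ Fin n) ℝ} (hS : Sᵀ * sympJ n * S = sympJ n) :
    {u : ℝ | (S * (1 - u • sympJ n) - (1 + u • sympJ n)).det = 0}.Finite := by
  set J := sympJ n
  have hker (u : {u : ℝ | (S * (1 - u • J) - (1 + u • J)).det = 0}) :
      ∃ w ≠ 0, S *ᵥ ((1 - (u : ℝ) • J) *ᵥ w) = (1 + (u : ℝ) • J) *ᵥ w := by
    obtain ⟨w, hw, hwu⟩ := exists_mulVec_eq_zero_iff.mpr u.2
    exact ⟨w, hw, by rwa [sub_mulVec, ← mulVec_mulVec, sub_eq_zero] at hwu⟩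
  choose w hw0 hw using hker
  refine Set.finite_coe_iff.mp (finite_of_pairwise_dotProduct_eq_zero hw0 fun u u' huu' => ?_)
  have h : (2 * ((u : ℝ) - u')) * (w u ⬝ᵥ w u') = 0 := by
    calc (2 * ((u : ℝ) - u')) * (w u ⬝ᵥ w u')
        = w u ⬝ᵥ ((1 + (u : ℝ) • J)ᵀ * J * (1 + (u' : ℝ) • J)) *ᵥ w u'
          - w u ⬝ᵥ ((1 - (u : ℝ) • J)ᵀ * J * (1 - (u' : ℝ) • J)) *ᵥ w u' := by
          rw [← dotProduct_sub, ← sub_mulVec, transpose_one_add_smul_sympJ_mul_sympJ_mul_sub,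
            smul_mulVec, one_mulVec, dotProduct_smul, smul_eq_mul]
      _ = 0 := by
        rw [sub_eq_zero, ← mulVec_dotProduct_mulVec_mulVec, ← hw, ← hw,
          mulVec_dotProduct_mulVec_mulVec S J S, hS, mulVec_dotProduct_mulVec_mulVec]
  exact (mul_eq_zero.mp h).resolve_left
    (mul_ne_zero two_ne_zero (sub_ne_zero.mpr fun h => huu' (Subtype.ext h)))

end SympJ

noncomputable def ofComplex (n : ℕ) : ℂ →ₐ[ℝ] Matrix (Fin n ⊕ Fin n) (Fin n ⊕ Fin n) ℝ :=
  Complex.liftAux (sympJ n) (sympJ_mul_self n)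

noncomputable def cayley (u : ℝ) : ℂ := (1 + u * Complex.I) / (1 - u * Complex.I)

section OfComplex

variable {n : ℕ}

theorem ofComplex_apply (z : ℂ) : ofComplex n z = z.re • 1 + z.im • sympJ n := by
  simp [ofComplex, Algebra.algebraMap_eq_smul_one]

theorem ofComplex_I : ofComplex n Complex.I = sympJ n := by
  simp [ofComplex_apply]

theorem transpose_ofComplex (z : ℂ) : (ofComplex n z)ᵀ = ofComplex n (conj z) := by
  simp [ofComplex_apply, sympJ_transpose]

theorem transpose_ofComplex_mul_sympJ_mul_ofComplex (z : ℂ) :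
    (ofComplex n z)ᵀ * sympJ n * ofComplex n z = Complex.normSq z • sympJ n := by
  rw [transpose_ofComplex, ← ofComplex_I, ← map_mul, ← map_mul, mul_right_comm,
    Complex.conj_mul', ← Complex.ofReal_pow, Complex.sq_norm, ← Complex.real_smul, map_smul]

theorem ofComplex_mem_symplecticGroup {z : ℂ} (hz : Complex.normSq z = 1) :
    ofComplex n z ∈ symplecticGroup (Fin n) ℝ := by
  rw [mem_symplecticGroup_iff_sympJ, transpose_ofComplex_mul_sympJ_mul_ofComplex, hz, one_smul]

theorem det_ofComplex_ne_zero {z : ℂ} (hz : z ≠ 0) : (ofComplex n z).det ≠ 0 :=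
  ((isUnit_iff_isUnit_det _).mp ((isUnit_iff_ne_zero.mpr hz).map (ofComplex n))).ne_zero

theorem toBlocks₁₂_mul_ofComplex (S : Matrix (Fin n ⊕ Fin n) (Fin n ⊕ Fin n) ℝ) (z : ℂ) :
    (S * ofComplex n z).toBlocks₁₂ = z.re • S.toBlocks₁₂ + z.im • S.toBlocks₁₁ := by
  rw [ofComplex_apply, mul_add, mul_smul_comm, mul_smul_comm, mul_one, ← fromBlocks_toBlocks S,
    sympJ, fromBlocks_multiply]
  simp [fromBlocks_smul, fromBlocks_add]

theorem toBlocks₁₂_ofComplex (z : ℂ) : (ofComplex n z).toBlocks₁₂ = z.im • 1 := by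
  have := toBlocks₁₂_mul_ofComplex (1 : Matrix (Fin n ⊕ Fin n) (Fin n ⊕ Fin n) ℝ) z
  rwa [one_mul, ← fromBlocks_one, toBlocks_fromBlocks₁₂, toBlocks_fromBlocks₁₁, smul_zero,
    zero_add] at this

theorem one_add_ofReal_mul_I_ne_zero (u : ℝ) : 1 + u * Complex.I ≠ 0 :=
  fun h => by simpa using congrArg Complex.re h

theorem cayley_re (u : ℝ) : (cayley u).re = (1 - u ^ 2) / (1 + u ^ 2) := by
  simp [cayley, Complex.div_re, Complex.normSq_apply]
  field_simp
  ring

theorem cayley_im (u : ℝ) : (cayley u).im = 2 * u / (1 + u ^ 2) := by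
  simp [cayley, Complex.div_im, Complex.normSq_apply]
  field_simp
  ring

theorem normSq_cayley (u : ℝ) : Complex.normSq (cayley u) = 1 := by
  have h : Complex.normSq (1 - u * Complex.I) = 1 + u ^ 2 := by
    simp [Complex.normSq_apply]; ring
  rw [cayley, map_div₀, div_eq_one_iff_eq (by rw [h]; positivity), h]
  simp [Complex.normSq_apply]; ring

theorem conj_cayley (u : ℝ) : conj (cayley u) = (1 - u * Complex.I) / (1 + u * Complex.I) := by
  simp [cayley, map_div₀, sub_eq_add_neg]

theorem toBlocks₁₂_mul_ofComplex_conj_cayley (S : Matrix (Fin n ⊕ Fin n) (Fin n ⊕ Fin n) ℝ)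
    {u : ℝ} (hu : u ^ 2 ≠ 1) :
    (S * ofComplex n (conj (cayley u))).toBlocks₁₂
      = ((1 - u ^ 2) / (1 + u ^ 2)) • (S.toBlocks₁₂ - (2 * u / (1 - u ^ 2)) • S.toBlocks₁₁) := by
  have hu' : 1 - u ^ 2 ≠ 0 := sub_ne_zero.mpr (Ne.symm hu)
  rw [toBlocks₁₂_mul_ofComplex, Complex.conj_re, Complex.conj_im, cayley_re, cayley_im, smul_sub,
    smul_smul, neg_smul, ← sub_eq_add_neg]
  congr 2
  field_simp

theorem mul_ofComplex_conj_cayley_sub_one (S : Matrix (Fin n ⊕ Fin n) (Fin n ⊕ Fin n) ℝ) (u : ℝ) :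
    S * ofComplex n (conj (cayley u)) - 1
      = (S * (1 - u • sympJ n) - (1 + u • sympJ n)) * ofComplex n (1 + u * Complex.I)⁻¹ := by
  have hplus : ofComplex n (1 + u * Complex.I) = 1 + u • sympJ n := by simp [ofComplex_apply]
  have hminus : ofComplex n (1 - u * Complex.I) = 1 - u • sympJ n := by
    simp [ofComplex_apply, sub_eq_add_neg]
  rw [conj_cayley, div_eq_mul_inv, map_mul, ← hplus, ← hminus, sub_mul, Matrix.mul_assoc,
    ← map_mul (ofComplex n) (1 + u * Complex.I), mul_inv_cancel₀ (one_add_ofReal_mul_I_ne_zero u),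
    map_one]

end OfComplex

theorem injOn_two_mul_div_one_sub_sq :
    Set.InjOn (fun u : ℝ => 2 * u / (1 - u ^ 2)) (Set.Ioo 0 1) := by
  intro u ⟨hu0, hu1⟩ v ⟨hv0, hv1⟩ huv
  have hu : 1 - u ^ 2 ≠ 0 := by nlinarith
  have hv : 1 - v ^ 2 ≠ 0 := by nlinarith
  field_simp at huv
  nlinarith [mul_pos hu0 hv0]

theorem exists_mem_Ioo_zero_one_notMem_of_finite {T₁ T₂ : Set ℝ} (h₁ : T₁.Finite)
    (h₂ : T₂.Finite) : ∃ u ∈ Set.Ioo (0 : ℝ) 1, 2 * u / (1 - u ^ 2) ∉ T₁ ∧ u ∉ T₂ := by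
  have hfin : (Set.Ioo 0 1 ∩ (fun u : ℝ => 2 * u / (1 - u ^ 2)) ⁻¹' T₁ ∪ T₂).Finite :=
    (Set.Finite.of_finite_image (h₁.subset (Set.image_subset_iff.mpr Set.inter_subset_right))
      (injOn_two_mul_div_one_sub_sq.mono Set.inter_subset_left)).union h₂
  obtain ⟨u, hu, hnot⟩ := ((Set.Ioo_infinite zero_lt_one).sdiff hfin).nonempty
  exact ⟨u, hu, fun h => hnot (Or.inl ⟨hu, h⟩), fun h => hnot (Or.inr h)⟩

/-- every symplectic matrix `S` is a product `S = S₁ S₂` of two free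
symplectic matrices (symplectic with invertible upper-right block) satisfying in addition
`det (S₁ - I) ≠ 0` and `det (S₂ - I) ≠ 0`. -/
theorem symplectic_factorization_free_no_fixed_point {n : ℕ}
    (S : Matrix (Fin n ⊕ Fin n) (Fin n ⊕ Fin n) ℝ)
    (hS : Sᵀ * sympJ n * S = sympJ n) :
    ∃ S₁ S₂ : Matrix (Fin n ⊕ Fin n) (Fin n ⊕ Fin n) ℝ,
      S₁ᵀ * sympJ n * S₁ = sympJ n ∧ S₂ᵀ * sympJ n * S₂ = sympJ n ∧
      (S₁.toBlocks₁₂).det ≠ 0 ∧ (S₂.toBlocks₁₂).det ≠ 0 ∧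
      (S₁ - 1).det ≠ 0 ∧ (S₂ - 1).det ≠ 0 ∧
      S = S₁ * S₂ := by
  have hSp := mem_symplecticGroup_iff_sympJ.mpr hS
  obtain ⟨u, ⟨hu0, hu1⟩, hfree, hfix⟩ := exists_mem_Ioo_zero_one_notMem_of_finite
    (SymplecticGroup.finite_setOf_det_toBlocks₁₂_sub_smul_toBlocks₁₁_eq_zero hSp)
    (finite_setOf_det_mul_one_sub_smul_sympJ_sub_eq_zero hS)
  have him : (cayley u).im ≠ 0 := by
    rw [cayley_im]; exact (div_pos (by positivity) (by positivity)).ne'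
  have hnormSq : Complex.normSq (conj (cayley u)) = 1 := by
    rw [Complex.normSq_conj, normSq_cayley]
  refine ⟨S * ofComplex n (conj (cayley u)), ofComplex n (cayley u),
    mem_symplecticGroup_iff_sympJ.mp (mul_mem hSp (ofComplex_mem_symplecticGroup hnormSq)),
    mem_symplecticGroup_iff_sympJ.mp (ofComplex_mem_symplecticGroup (normSq_cayley u)),
    ?_, ?_, ?_, ?_, ?_⟩
  · rw [toBlocks₁₂_mul_ofComplex_conj_cayley S (by nlinarith), det_smul]
    exact mul_ne_zero (pow_ne_zero _ (div_pos (by nlinarith) (by positivity)).ne') hfree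
  · rw [toBlocks₁₂_ofComplex, det_smul, det_one, mul_one]
    exact pow_ne_zero _ him
  · rw [mul_ofComplex_conj_cayley_sub_one, det_mul]
    exact mul_ne_zero hfix (det_ofComplex_ne_zero (inv_ne_zero (one_add_ofReal_mul_I_ne_zero u)))
  · rw [← map_one (ofComplex n), ← map_sub]
    exact det_ofComplex_ne_zero (sub_ne_zero.mpr fun h => him (by rw [h, Complex.one_im]))
  · rw [Matrix.mul_assoc, ← map_mul, ← Complex.normSq_eq_conj_mul_self, normSq_cayley,
      Complex.ofReal_one, map_one, Matrix.mul_one]
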